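/- arXiv:1910.09066 — 4 statements merged into one kernel-verified Lean document; each statement's English description precedes it below -/
import Mathlib

section
/- For a finite-horizon MDP with horizon T, behavior policy π with π(a|s) > 0 for all (s,a), and target policy π', the step-wise importance sampling estimator Ĵ(π') = Σ_{t=0}^T γ^t (Π_{t'=0}^t π'(a_{t'}|s_{t'})/π(a_{t'}|s_{t'})) r_t is an unbiased estimator of the expected return J(π') = E_{π'}[Σ_{t=0}^T γ^t r_t], where the expectation on the left is over trajectories generated by π. -/
open Finset

/-- A finite episodic MDP `M = (S, A, P, R, T, γ, s₀)` with finitely supported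
reward distribution: `Rd s a` is a distribution over reward outcomes `Rw`,
whose real value is `rval`. -/
structure FinMDP (S A Rw : Type) where
  T : ℕ
  γ : ℝ
  s0 : S
  P : S → A → S → ℝ
  Rd : S → A → Rw → ℝ
  rval : Rw → ℝ

variable {S A Rw : Type} [Fintype S] [Fintype A] [Fintype Rw] [DecidableEq S] [DecidableEq A]

/-- `π s a` is a probability distribution over actions for each state. -/
def IsPolicy (π : S → A → ℝ) : Prop := (∀ s a, 0 ≤ π s a) ∧ (∀ s, ∑ a, π s a = 1)

namespace FinMDP

/-- the transition and reward functions are genuine probability distributions. -/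
def Valid (M : FinMDP S A Rw) : Prop :=
  (∀ s a s', 0 ≤ M.P s a s') ∧ (∀ s a, ∑ s', M.P s a s' = 1) ∧
  (∀ s a r, 0 ≤ M.Rd s a r) ∧ (∀ s a, ∑ r, M.Rd s a r = 1)

/-- a trajectory `s₀, a₀, r₀, …, s_T, a_T, r_T, s_{T+1}`. -/
def Traj (M : FinMDP S A Rw) : Type :=
  (Fin (M.T + 2) → S) × (Fin (M.T + 1) → A) × (Fin (M.T + 1) → Rw)

instance (M : FinMDP S A Rw) : Fintype M.Traj :=
  inferInstanceAs (Fintype (_ × _ × _))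

variable (M : FinMDP S A Rw)

/-- state at time `t` (index clamped to the horizon). -/
def st (τ : M.Traj) (t : ℕ) : S := τ.1 ⟨min t (M.T + 1), by omega⟩

/-- action at time `t` (index clamped to the horizon). -/
def ac (τ : M.Traj) (t : ℕ) : A := τ.2.1 ⟨min t M.T, by omega⟩

/-- reward at time `t` (index clamped to the horizon). -/
def rew (τ : M.Traj) (t : ℕ) : ℝ := M.rval (τ.2.2 ⟨min t M.T, by omega⟩)

/-- probability of a trajectory when actions are taken according to `π`. -/
def prob (π : S → A → ℝ) (τ : M.Traj) : ℝ :=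
  (if M.st τ 0 = M.s0 then (1:ℝ) else 0) *
  ∏ t ∈ range (M.T + 1),
    (π (M.st τ t) (M.ac τ t) * M.Rd (M.st τ t) (M.ac τ t) (τ.2.2 ⟨min t M.T, by omega⟩) *
      M.P (M.st τ t) (M.ac τ t) (M.st τ (t + 1)))

/-- discounted return `Σ_{t=0}^T γ^t r_t` of a trajectory. -/
def ret (τ : M.Traj) : ℝ := ∑ t ∈ range (M.T + 1), M.γ ^ t * M.rew τ t

/-- expected return `J(π)`. -/
def J (π : S → A → ℝ) : ℝ := ∑ τ : M.Traj, M.prob π τ * M.ret τ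

end FinMDP


namespace FinMDP

variable (M : FinMDP S A Rw)

/-- reward outcome at time `t`. -/
def rwo (τ : M.Traj) (t : ℕ) : Rw := τ.2.2 ⟨min t M.T, by omega⟩

/-- initial-state indicator. -/
def init (τ : M.Traj) : ℝ := if M.st τ 0 = M.s0 then (1:ℝ) else 0

/-- one-step factor of the trajectory probability. -/
def stepf (μ : S → A → ℝ) (t : ℕ) (τ : M.Traj) : ℝ :=
  μ (M.st τ t) (M.ac τ t) * M.Rd (M.st τ t) (M.ac τ t) (M.rwo τ t) *
    M.P (M.st τ t) (M.ac τ t) (M.st τ (t + 1))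

lemma prob_eq (μ : S → A → ℝ) (τ : M.Traj) :
    M.prob μ τ = M.init τ * ∏ t ∈ range (M.T + 1), M.stepf μ t τ := rfl

/-- update the trajectory at step `u`: next state, action, reward outcome. -/
def upd (u : ℕ) (hu : u ≤ M.T) (τ : M.Traj) (s : S) (a : A) (r : Rw) : M.Traj :=
  (Function.update τ.1 ⟨u + 1, by omega⟩ s,
   Function.update τ.2.1 ⟨u, by omega⟩ a,
   Function.update τ.2.2 ⟨u, by omega⟩ r)

lemma st_upd_le (u : ℕ) (hu : u ≤ M.T) (τ : M.Traj) (s a r) {k : ℕ} (hk : k ≤ u) :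
    M.st (M.upd u hu τ s a r) k = M.st τ k := by
  simp only [st, upd]
  exact Function.update_of_ne (by simp [Fin.ext_iff]; omega) _ _

lemma st_upd_self (u : ℕ) (hu : u ≤ M.T) (τ : M.Traj) (s a r) :
    M.st (M.upd u hu τ s a r) (u + 1) = s := by
  simp only [st, upd]
  have : (⟨min (u+1) (M.T+1), by omega⟩ : Fin (M.T+2)) = ⟨u+1, by omega⟩ := by
    simp [Fin.ext_iff]; omega
  rw [this, Function.update_self]

lemma ac_upd_lt (u : ℕ) (hu : u ≤ M.T) (τ : M.Traj) (s a r) {k : ℕ} (hk : k < u) :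
    M.ac (M.upd u hu τ s a r) k = M.ac τ k := by
  simp only [ac, upd]
  exact Function.update_of_ne (by simp [Fin.ext_iff]; omega) _ _

lemma ac_upd_self (u : ℕ) (hu : u ≤ M.T) (τ : M.Traj) (s a r) :
    M.ac (M.upd u hu τ s a r) u = a := by
  simp only [ac, upd]
  have : (⟨min u M.T, by omega⟩ : Fin (M.T+1)) = ⟨u, by omega⟩ := by
    simp [Fin.ext_iff]; omega
  rw [this, Function.update_self]

lemma rwo_upd_lt (u : ℕ) (hu : u ≤ M.T) (τ : M.Traj) (s a r) {k : ℕ} (hk : k < u) :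
    M.rwo (M.upd u hu τ s a r) k = M.rwo τ k := by
  simp only [rwo, upd]
  exact Function.update_of_ne (by simp [Fin.ext_iff]; omega) _ _

lemma rwo_upd_self (u : ℕ) (hu : u ≤ M.T) (τ : M.Traj) (s a r) :
    M.rwo (M.upd u hu τ s a r) u = r := by
  simp only [rwo, upd]
  have : (⟨min u M.T, by omega⟩ : Fin (M.T+1)) = ⟨u, by omega⟩ := by
    simp [Fin.ext_iff]; omega
  rw [this, Function.update_self]

lemma rew_upd_lt (u : ℕ) (hu : u ≤ M.T) (τ : M.Traj) (s a r) {k : ℕ} (hk : k < u) :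
    M.rew (M.upd u hu τ s a r) k = M.rew τ k := by
  have := M.rwo_upd_lt u hu τ s a r hk
  simp only [rwo] at this
  simp only [rew, this]

lemma init_upd (u : ℕ) (hu : u ≤ M.T) (τ : M.Traj) (s a r) :
    M.init (M.upd u hu τ s a r) = M.init τ := by
  simp only [init, M.st_upd_le u hu τ s a r (Nat.zero_le u)]

lemma stepf_upd_lt (μ : S → A → ℝ) (u : ℕ) (hu : u ≤ M.T) (τ : M.Traj) (s a r)
    {k : ℕ} (hk : k < u) :
    M.stepf μ k (M.upd u hu τ s a r) = M.stepf μ k τ := by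
  simp only [stepf, M.st_upd_le u hu τ s a r (le_of_lt hk),
    M.st_upd_le u hu τ s a r (Nat.succ_le_of_lt hk),
    M.ac_upd_lt u hu τ s a r hk, M.rwo_upd_lt u hu τ s a r hk]

lemma stepf_upd_self (μ : S → A → ℝ) (u : ℕ) (hu : u ≤ M.T) (τ : M.Traj) (s a r) :
    M.stepf μ u (M.upd u hu τ s a r) =
      μ (M.st τ u) a * M.Rd (M.st τ u) a r * M.P (M.st τ u) a s := by
  simp only [stepf, M.st_upd_le u hu τ s a r (le_refl u), M.st_upd_self u hu τ s a r,
    M.ac_upd_self u hu τ s a r, M.rwo_upd_self u hu τ s a r]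

/-- the `c`-to-1 marginalization identity. -/
lemma marg (u : ℕ) (hu : u ≤ M.T) (H : M.Traj → ℝ) :
    ((Fintype.card S * Fintype.card A * Fintype.card Rw : ℕ) : ℝ) * ∑ τ : M.Traj, H τ =
      ∑ τ : M.Traj, ∑ s : S, ∑ a : A, ∑ r : Rw, H (M.upd u hu τ s a r) := by
  classical
  have hinv : Function.Involutive
      (fun p : M.Traj × S × A × Rw =>
        (M.upd u hu p.1 p.2.1 p.2.2.1 p.2.2.2,
          p.1.1 ⟨u + 1, by omega⟩, p.1.2.1 ⟨u, by omega⟩, p.1.2.2 ⟨u, by omega⟩)) := by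
    rintro ⟨⟨f, g, h⟩, s, a, r⟩
    simp [upd, Function.update_self, Function.update_idem, Function.update_eq_self,
      Prod.ext_iff]
  have key : ∑ p : M.Traj × S × A × Rw, H (M.upd u hu p.1 p.2.1 p.2.2.1 p.2.2.2) =
      ∑ p : M.Traj × S × A × Rw, H p.1 := by
    have heq := Equiv.sum_comp hinv.toPerm
      (fun p : M.Traj × S × A × Rw => H (M.upd u hu p.1 p.2.1 p.2.2.1 p.2.2.2))
    rw [← heq]
    refine Fintype.sum_congr _ _ fun p => ?_
    simp only [Function.Involutive.coe_toPerm]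
    exact congrArg H (congrArg Prod.fst (hinv p))
  calc ((Fintype.card S * Fintype.card A * Fintype.card Rw : ℕ) : ℝ) * ∑ τ : M.Traj, H τ
      = ∑ p : M.Traj × S × A × Rw, H p.1 := by
        simp only [Fintype.sum_prod_type, Finset.sum_const, Finset.card_univ,
          nsmul_eq_mul, Finset.mul_sum, Fintype.card_prod]
        refine Finset.sum_congr rfl fun τ _ => ?_
        push_cast
        ring
    _ = ∑ p : M.Traj × S × A × Rw, H (M.upd u hu p.1 p.2.1 p.2.2.1 p.2.2.2) := key.symm
    _ = ∑ τ : M.Traj, ∑ s : S, ∑ a : A, ∑ r : Rw, H (M.upd u hu τ s a r) := by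
        rw [Fintype.sum_prod_type]
        refine Finset.sum_congr rfl fun τ _ => ?_
        rw [Fintype.sum_prod_type]
        refine Finset.sum_congr rfl fun s _ => ?_
        rw [Fintype.sum_prod_type]

/-- partial-horizon weighted sum with a time-dependent policy. -/
def EE (μ : ℕ → S → A → ℝ) (u : ℕ) (f : M.Traj → ℝ) : ℝ :=
  ∑ τ : M.Traj, (M.init τ * ∏ t' ∈ range u, M.stepf (μ t') t' τ) * f τ

lemma descend (hM : M.Valid) (μ : ℕ → S → A → ℝ) (u : ℕ) (hu : u ≤ M.T)
    (hμ : ∀ s, ∑ a, μ u s a = 1) (f : M.Traj → ℝ)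
    (hf : ∀ τ s a r, f (M.upd u hu τ s a r) = f τ) :
    ((Fintype.card S * Fintype.card A * Fintype.card Rw : ℕ) : ℝ) * M.EE μ (u + 1) f =
      M.EE μ u f := by
  have step1 : M.EE μ (u + 1) f =
      ∑ τ : M.Traj, ((M.init τ * ∏ t' ∈ range u, M.stepf (μ t') t' τ) * f τ) *
        M.stepf (μ u) u τ := by
    refine Finset.sum_congr rfl fun τ _ => ?_
    rw [Finset.prod_range_succ]; ring
  rw [step1, marg M u hu]
  refine Finset.sum_congr rfl fun τ _ => ?_
  have hterm : ∀ s a r,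
      ((M.init (M.upd u hu τ s a r) *
          ∏ t' ∈ range u, M.stepf (μ t') t' (M.upd u hu τ s a r)) *
        f (M.upd u hu τ s a r)) * M.stepf (μ u) u (M.upd u hu τ s a r) =
      ((M.init τ * ∏ t' ∈ range u, M.stepf (μ t') t' τ) * f τ) *
        (μ u (M.st τ u) a * M.Rd (M.st τ u) a r * M.P (M.st τ u) a s) := by
    intro s a r
    rw [M.init_upd u hu τ s a r, hf τ s a r, M.stepf_upd_self (μ u) u hu τ s a r]
    have hprod : ∏ t' ∈ range u, M.stepf (μ t') t' (M.upd u hu τ s a r) =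
        ∏ t' ∈ range u, M.stepf (μ t') t' τ :=
      Finset.prod_congr rfl fun t' ht' =>
        M.stepf_upd_lt (μ t') u hu τ s a r (Finset.mem_range.mp ht')
    rw [hprod]
  simp only [hterm]
  simp only [← Finset.mul_sum]
  have hsum : ∑ s : S, ∑ a : A, ∑ r : Rw,
      μ u (M.st τ u) a * M.Rd (M.st τ u) a r * M.P (M.st τ u) a s = 1 := by
    rw [Finset.sum_comm]
    have hinner : ∀ a : A, ∑ s : S, ∑ r : Rw,
        μ u (M.st τ u) a * M.Rd (M.st τ u) a r * M.P (M.st τ u) a s = μ u (M.st τ u) a := by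
      intro a
      have : ∀ s : S, ∑ r : Rw,
          μ u (M.st τ u) a * M.Rd (M.st τ u) a r * M.P (M.st τ u) a s =
          μ u (M.st τ u) a * M.P (M.st τ u) a s := by
        intro s
        have hr : ∀ r : Rw, μ u (M.st τ u) a * M.Rd (M.st τ u) a r * M.P (M.st τ u) a s =
            (μ u (M.st τ u) a * M.P (M.st τ u) a s) * M.Rd (M.st τ u) a r := fun r => by ring
        simp only [hr]
        rw [← Finset.mul_sum, hM.2.2.2, mul_one]
      simp only [this, ← Finset.mul_sum, hM.2.1, mul_one]
    simp only [hinner, hμ]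
  rw [hsum, mul_one]

lemma EE_stable (hM : M.Valid) (μ : ℕ → S → A → ℝ) (hμ : ∀ u s, ∑ a, μ u s a = 1)
    (f : M.Traj → ℝ) (v : ℕ)
    (hf : ∀ u (hu : u ≤ M.T), v ≤ u → ∀ τ s a r, f (M.upd u hu τ s a r) = f τ) :
    ∀ k, v + k ≤ M.T + 1 →
      ((Fintype.card S * Fintype.card A * Fintype.card Rw : ℕ) : ℝ) ^ k *
        M.EE μ (v + k) f = M.EE μ v f := by
  intro k
  induction k with
  | zero => intro _; simp
  | succ k ih =>
    intro hk
    have hu : v + k ≤ M.T := by omega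
    have : ((Fintype.card S * Fintype.card A * Fintype.card Rw : ℕ) : ℝ) *
        M.EE μ (v + k + 1) f = M.EE μ (v + k) f :=
      M.descend hM μ (v + k) hu (hμ (v + k)) f (hf (v + k) hu (by omega))
    calc ((Fintype.card S * Fintype.card A * Fintype.card Rw : ℕ) : ℝ) ^ (k + 1) *
          M.EE μ (v + (k + 1)) f
        = ((Fintype.card S * Fintype.card A * Fintype.card Rw : ℕ) : ℝ) ^ k *
          (((Fintype.card S * Fintype.card A * Fintype.card Rw : ℕ) : ℝ) *
            M.EE μ (v + k + 1) f) := by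
          rw [show v + (k+1) = v + k + 1 from rfl, pow_succ]; ring
      _ = ((Fintype.card S * Fintype.card A * Fintype.card Rw : ℕ) : ℝ) ^ k *
            M.EE μ (v + k) f := by rw [this]
      _ = M.EE μ v f := ih (by omega)

end FinMDP

/-- the step-wise importance sampling estimator
`Ĵ(π') = Σ_{t=0}^T γ^t (Π_{t'=0}^t π'(a_{t'}|s_{t'})/π(a_{t'}|s_{t'})) r_t`
is unbiased for `J(π')` under trajectories generated by `π`. -/
theorem stepwise_IS_unbiased (M : FinMDP S A Rw) (hM : M.Valid)
    (hγ0 : 0 ≤ M.γ) (hγ1 : M.γ < 1)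
    (π π' : S → A → ℝ) (hπ : IsPolicy π) (hπpos : ∀ s a, 0 < π s a) (hπ' : IsPolicy π') :
    ∑ τ : M.Traj, M.prob π τ *
      (∑ t ∈ range (M.T + 1), M.γ ^ t *
        (∏ t' ∈ range (t + 1), π' (M.st τ t') (M.ac τ t') / π (M.st τ t') (M.ac τ t')) *
        M.rew τ t)
      = M.J π' := by
  classical
  haveI : Nonempty S := ⟨M.s0⟩
  have hA : Nonempty A := by
    rcases isEmpty_or_nonempty A with h | h
    · exfalso; have := hπ.2 M.s0; simp [Finset.univ_eq_empty] at this
    · exact h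
  have hR : Nonempty Rw := by
    rcases isEmpty_or_nonempty Rw with h | h
    · exfalso
      obtain ⟨a⟩ := hA
      have := hM.2.2.2 M.s0 a
      simp [Finset.univ_eq_empty] at this
    · exact h
  set c : ℝ := ((Fintype.card S * Fintype.card A * Fintype.card Rw : ℕ) : ℝ) with hc
  have hc0 : c ≠ 0 := by
    have h1 : 0 < Fintype.card S := Fintype.card_pos
    have h2 : 0 < Fintype.card A := Fintype.card_pos
    have h3 : 0 < Fintype.card Rw := Fintype.card_pos
    rw [hc]
    exact Nat.cast_ne_zero.mpr (by positivity)
  have key : ∀ t ∈ range (M.T + 1),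
      (∑ τ : M.Traj, M.prob π τ * (M.γ ^ t *
        (∏ t' ∈ range (t + 1), π' (M.st τ t') (M.ac τ t') / π (M.st τ t') (M.ac τ t')) *
        M.rew τ t)) = ∑ τ : M.Traj, M.prob π' τ * (M.γ ^ t * M.rew τ t) := by
    intro t ht
    have htT : t ≤ M.T := by have := Finset.mem_range.mp ht; omega
    set μmix : ℕ → S → A → ℝ := fun u => if u ≤ t then π' else π with hμmix
    set μ2 : ℕ → S → A → ℝ := fun _ => π' with hμ2
    set ft : M.Traj → ℝ := fun τ => M.γ ^ t * M.rew τ t with hft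
    have hμmix1 : ∀ u s, ∑ a, μmix u s a = 1 := by
      intro u s
      by_cases h : u ≤ t <;> simp [hμmix, h, hπ'.2 s, hπ.2 s]
    have hμ21 : ∀ u s, ∑ a, μ2 u s a = 1 := fun u s => hπ'.2 s
    have hfinv : ∀ u (hu : u ≤ M.T), t + 1 ≤ u → ∀ τ s a r,
        ft (M.upd u hu τ s a r) = ft τ := by
      intro u hu hut τ s a r
      simp only [hft, M.rew_upd_lt u hu τ s a r (by omega : t < u)]
    have step1 : (∑ τ : M.Traj, M.prob π τ * (M.γ ^ t *
        (∏ t' ∈ range (t + 1), π' (M.st τ t') (M.ac τ t') / π (M.st τ t') (M.ac τ t')) *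
        M.rew τ t)) = M.EE μmix (M.T + 1) ft := by
      simp only [FinMDP.EE, hft]
      refine Finset.sum_congr rfl fun τ _ => ?_
      have hratio : (∏ t' ∈ range (t + 1), M.stepf π t' τ) *
          (∏ t' ∈ range (t + 1), π' (M.st τ t') (M.ac τ t') / π (M.st τ t') (M.ac τ t')) =
          ∏ t' ∈ range (t + 1), M.stepf π' t' τ := by
        rw [← Finset.prod_mul_distrib]
        refine Finset.prod_congr rfl fun t' _ => ?_
        have hp := (hπpos (M.st τ t') (M.ac τ t')).ne'
        simp only [FinMDP.stepf]
        field_simp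
      have hsplitπ : ∏ t' ∈ range (M.T + 1), M.stepf π t' τ =
          (∏ t' ∈ range (t + 1), M.stepf π t' τ) *
            ∏ t' ∈ Ico (t + 1) (M.T + 1), M.stepf π t' τ := by
        simp only [Finset.range_eq_Ico]
        rw [Finset.prod_Ico_consecutive _ (Nat.zero_le (t + 1)) (by omega : t + 1 ≤ M.T + 1)]
      have hsplitmix : ∏ t' ∈ range (M.T + 1), M.stepf (μmix t') t' τ =
          (∏ t' ∈ range (t + 1), M.stepf (μmix t') t' τ) *
            ∏ t' ∈ Ico (t + 1) (M.T + 1), M.stepf (μmix t') t' τ := by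
        simp only [Finset.range_eq_Ico]
        rw [Finset.prod_Ico_consecutive _ (Nat.zero_le (t + 1)) (by omega : t + 1 ≤ M.T + 1)]
      have h1 : ∏ t' ∈ range (t + 1), M.stepf (μmix t') t' τ =
          ∏ t' ∈ range (t + 1), M.stepf π' t' τ :=
        Finset.prod_congr rfl fun t' ht' => by
          have h' : t' ≤ t := by have := Finset.mem_range.mp ht'; omega
          simp [hμmix, h']
      have h2 : ∏ t' ∈ Ico (t + 1) (M.T + 1), M.stepf (μmix t') t' τ =
          ∏ t' ∈ Ico (t + 1) (M.T + 1), M.stepf π t' τ :=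
        Finset.prod_congr rfl fun t' ht' => by
          have h' : ¬ (t' ≤ t) := by have := Finset.mem_Ico.mp ht'; omega
          simp [hμmix, h']
      rw [M.prob_eq, hsplitπ, hsplitmix, h1, h2, ← hratio]
      ring
    have step2 : M.EE μmix (M.T + 1) ft = M.EE μ2 (M.T + 1) ft := by
      have e1 := M.EE_stable hM μmix hμmix1 ft (t + 1) hfinv (M.T - t) (by omega)
      have e2 := M.EE_stable hM μ2 hμ21 ft (t + 1) hfinv (M.T - t) (by omega)
      have hTt : t + 1 + (M.T - t) = M.T + 1 := by omega
      rw [hTt] at e1 e2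
      have hmid : M.EE μmix (t + 1) ft = M.EE μ2 (t + 1) ft := by
        simp only [FinMDP.EE]
        refine Finset.sum_congr rfl fun τ _ => ?_
        congr 2
        refine Finset.prod_congr rfl fun t' ht' => ?_
        have h' : t' ≤ t := by have := Finset.mem_range.mp ht'; omega
        simp [hμmix, hμ2, h']
      have hcc := e1.trans (hmid.trans e2.symm)
      exact mul_left_cancel₀ (pow_ne_zero _ hc0) hcc
    have step3 : M.EE μ2 (M.T + 1) ft = ∑ τ : M.Traj, M.prob π' τ * (M.γ ^ t * M.rew τ t) := by
      simp only [FinMDP.EE, hft, hμ2]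
      refine Finset.sum_congr rfl fun τ _ => ?_
      rw [M.prob_eq]
    rw [step1, step2, step3]
  calc ∑ τ : M.Traj, M.prob π τ *
      (∑ t ∈ range (M.T + 1), M.γ ^ t *
        (∏ t' ∈ range (t + 1), π' (M.st τ t') (M.ac τ t') / π (M.st τ t') (M.ac τ t')) *
        M.rew τ t)
      = ∑ t ∈ range (M.T + 1), ∑ τ : M.Traj, M.prob π τ * (M.γ ^ t *
        (∏ t' ∈ range (t + 1), π' (M.st τ t') (M.ac τ t') / π (M.st τ t') (M.ac τ t')) *
        M.rew τ t) := by
        simp only [Finset.mul_sum]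
        exact Finset.sum_comm
    _ = ∑ t ∈ range (M.T + 1), ∑ τ : M.Traj, M.prob π' τ * (M.γ ^ t * M.rew τ t) :=
        Finset.sum_congr rfl key
    _ = ∑ τ : M.Traj, ∑ t ∈ range (M.T + 1), M.prob π' τ * (M.γ ^ t * M.rew τ t) :=
        Finset.sum_comm
    _ = M.J π' := by
        simp only [FinMDP.J, FinMDP.ret, Finset.mul_sum]
end

section
/- For a finite-horizon MDP, behavior policy π with full support, target policy π', and any bounded function b: S → ℝ with the convention b(s_{T+1}) = 0, the estimator Ĵ(π') = b(s_0) + Σ_{t=0}^T γ^t ρ_{[0:t]} (r_t - b(s_t) + γ b(s_{t+1})), where ρ_{[0:t]} = Π_{t'=0}^t π'(a_{t'}|s_{t'})/π(a_{t'}|s_{t'}), is an unbiased estimator of J(π') when trajectories are generated by π. -/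
/-!
Write the estimator as `b(s₀) + Σₜ γᵗ ρ_{[0:t]} δₜ` with `δₜ = rₜ - b(sₜ) + γ b(sₜ₊₁)`.
Multiplying the `π`-probability of a trajectory by `ρ_{[0:t]}` gives its probability under the
policy that follows `π'` up to time `t` and `π` afterwards. Since `δₜ` only depends on the
trajectory up to `sₜ₊₁`, summing out the later steps (whose transition weights are stochastic)
shows that this mixed policy and `π'` give `δₜ` the same expectation, so
`E_π[ρ_{[0:t]} δₜ] = E_π'[δₜ]`. Finally `Σₜ γᵗ δₜ` telescopes to the return minus `b(s₀)`.
-/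

open Finset

variable {S A Rw : Type} [Fintype S] [Fintype A] [Fintype Rw] [DecidableEq S] [DecidableEq A]

theorem Fintype.sum_fun_fin_succ {X β : Type} [Fintype X] [AddCommMonoid β] {n : ℕ}
    (g : (Fin (n + 1) → X) → β) :
    ∑ f : Fin (n + 1) → X, g f = ∑ x : X, ∑ f : Fin n → X, g (Fin.cons x f) := by
  rw [← (Fin.consEquiv fun _ => X).sum_comp, Fintype.sum_prod_type]
  rfl

section Paths

variable {S A R : Type}

def DependsOnPrefix {n : ℕ} (k : ℕ) (h : (Fin (n + 1) → S) → (Fin n → A) → (Fin n → R) → ℝ) :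
    Prop :=
  ∀ σ α ρ σ' α' ρ', (∀ i : Fin (n + 1), (i : ℕ) ≤ k → σ i = σ' i) →
    (∀ i : Fin n, (i : ℕ) < k → α i = α' i) → (∀ i : Fin n, (i : ℕ) < k → ρ i = ρ' i) →
    h σ α ρ = h σ' α' ρ'

theorem DependsOnPrefix.cons {n k : ℕ}
    {h : (Fin (n + 2) → S) → (Fin (n + 1) → A) → (Fin (n + 1) → R) → ℝ}
    (hh : DependsOnPrefix (k + 1) h) (s : S) (a : A) (r : R) :
    DependsOnPrefix k fun σ α ρ => h (Fin.cons s σ) (Fin.cons a α) (Fin.cons r ρ) := by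
  intro σ α ρ σ' α' ρ' hσ hα hρ
  refine hh _ _ _ _ _ _ ?_ ?_ ?_ <;> intro i hi <;> cases i using Fin.cases <;>
    simp_all [Fin.val_succ]

variable [Fintype S] [Fintype A] [Fintype R]

/-- Sum of `h` over the paths `s, a₀, r₀, σ 0, a₁, r₁, σ 1, …` of length `n`, weighted by
`∏ₜ w t sₜ aₜ rₜ sₜ₊₁`. -/
def pathSum (w : ℕ → S → A → R → S → ℝ) (n : ℕ) (s : S)
    (h : (Fin (n + 1) → S) → (Fin n → A) → (Fin n → R) → ℝ) : ℝ :=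
  ∑ σ : Fin n → S, ∑ α : Fin n → A, ∑ ρ : Fin n → R,
    (∏ t : Fin n, w t ((Fin.cons s σ : Fin (n + 1) → S) t.castSucc) (α t) (ρ t) (σ t)) *
      h (Fin.cons s σ) α ρ

def IsStochastic (w : ℕ → S → A → R → S → ℝ) : Prop :=
  ∀ t s, ∑ s', ∑ a, ∑ r, w t s a r s' = 1

theorem pathSum_succ (w : ℕ → S → A → R → S → ℝ) (n : ℕ) (s : S)
    (h : (Fin (n + 2) → S) → (Fin (n + 1) → A) → (Fin (n + 1) → R) → ℝ) :
    pathSum w (n + 1) s h = ∑ s', ∑ a, ∑ r, w 0 s a r s' *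
      pathSum (fun t => w (t + 1)) n s' fun σ α ρ =>
        h (Fin.cons s σ) (Fin.cons a α) (Fin.cons r ρ) := by
  simp only [pathSum, Fintype.sum_fun_fin_succ, Fin.prod_univ_succ, Fin.cons_succ, Fin.cons_zero,
    Fin.castSucc_zero, ← Fin.succ_castSucc, Fin.val_succ, Fin.val_zero, mul_sum, mul_assoc]
  refine sum_congr rfl fun s' _ => ?_
  rw [sum_comm]
  refine sum_congr rfl fun a _ => ?_
  rw [sum_congr rfl fun σ _ => sum_comm]
  exact sum_comm

theorem IsStochastic.shift {w : ℕ → S → A → R → S → ℝ} (hw : IsStochastic w) :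
    IsStochastic fun t => w (t + 1) :=
  fun t => hw (t + 1)

theorem IsStochastic.nonempty {w : ℕ → S → A → R → S → ℝ} (hw : IsStochastic w) (s : S) :
    Nonempty (A × R) := by
  obtain ⟨s', -, hs'⟩ := exists_ne_zero_of_sum_ne_zero (hw 0 s ▸ one_ne_zero)
  obtain ⟨a, -, ha⟩ := exists_ne_zero_of_sum_ne_zero hs'
  obtain ⟨r, -, -⟩ := exists_ne_zero_of_sum_ne_zero ha
  exact ⟨(a, r)⟩

theorem pathSum_eq_of_forall_cons_eq {w : ℕ → S → A → R → S → ℝ} (hw : IsStochastic w) {n : ℕ}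
    {s : S} {h : (Fin (n + 1) → S) → (Fin n → A) → (Fin n → R) → ℝ} {c : ℝ}
    (hc : ∀ σ α ρ, h (Fin.cons s σ) α ρ = c) : pathSum w n s h = c := by
  induction n generalizing w s with
  | zero => simp [pathSum, hc]
  | succ n ih =>
    have hstep (s' : S) (a : A) (r : R) :
        pathSum (fun t => w (t + 1)) n s'
          (fun σ α ρ => h (Fin.cons s σ) (Fin.cons a α) (Fin.cons r ρ)) = c :=
      ih hw.shift fun σ α ρ => hc _ _ _
    simp only [pathSum_succ, hstep, ← sum_mul, hw 0 s, one_mul]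

theorem pathSum_congr_of_dependsOnPrefix {w w' : ℕ → S → A → R → S → ℝ} (hw : IsStochastic w)
    (hw' : IsStochastic w') {n k : ℕ} (hww' : ∀ t < k, w t = w' t)
    {h : (Fin (n + 1) → S) → (Fin n → A) → (Fin n → R) → ℝ} (hh : DependsOnPrefix k h) (s : S) :
    pathSum w n s h = pathSum w' n s h := by
  induction n generalizing k w w' s with
  | zero => simp [pathSum]
  | succ n ih =>
    cases k with
    | zero =>
      -- `h` is constant on paths from `s`; stochasticity of `w` provides a path to evaluate it at.
      obtain ⟨a, r⟩ := hw.nonempty s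
      have hc : ∀ σ α ρ, h (Fin.cons s σ) α ρ = h (fun _ => s) (fun _ => a) (fun _ => r) :=
        fun σ α ρ => hh _ _ _ _ _ _
          (fun i hi => by obtain rfl : i = 0 := Fin.ext (by simpa using hi); rfl)
          (fun i hi => absurd hi i.val.not_lt_zero) (fun i hi => absurd hi i.val.not_lt_zero)
      rw [pathSum_eq_of_forall_cons_eq hw hc, pathSum_eq_of_forall_cons_eq hw' hc]
    | succ k =>
      rw [pathSum_succ, pathSum_succ, hww' 0 k.succ_pos]
      refine sum_congr rfl fun s' _ => sum_congr rfl fun a _ =>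
        sum_congr rfl fun r _ => ?_
      rw [ih hw.shift hw'.shift (fun t ht => hww' (t + 1) (by omega)) (hh.cons s a r)]

end Paths

theorem Finset.prod_range_mul_prod_range_of_le {M : Type} [CommMonoid M] {n k : ℕ} (hk : k ≤ n)
    {f g h : ℕ → M} (hlt : ∀ t < k, h t = f t * g t) (hge : ∀ t, k ≤ t → h t = f t) :
    (∏ t ∈ range n, f t) * ∏ t ∈ range k, g t = ∏ t ∈ range n, h t := by
  obtain ⟨m, rfl⟩ := Nat.exists_eq_add_of_le hk
  rw [prod_range_add, prod_range_add, prod_congr rfl fun t ht => hlt t (mem_range.mp ht),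
    prod_congr rfl fun t _ => hge (k + t) (Nat.le_add_right k t), prod_mul_distrib]
  ac_rfl

theorem Finset.sum_range_succ_discounted_telescope {R : Type} [CommRing R] (γ : R) (r v : ℕ → R)
    (n : ℕ) :
    ∑ t ∈ range (n + 1), γ ^ t * (r t - v t + γ * (if t < n then v (t + 1) else 0)) =
      ∑ t ∈ range (n + 1), γ ^ t * r t - v 0 := by
  have hlt : ∀ t ∈ range n, γ ^ t * (r t - v t + γ * (if t < n then v (t + 1) else 0)) =
      γ ^ t * r t - (γ ^ t * v t - γ ^ (t + 1) * v (t + 1)) := fun t ht => by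
    rw [if_pos (mem_range.mp ht)]; ring
  rw [sum_range_succ, sum_congr rfl hlt, sum_sub_distrib, sum_range_sub' fun t => γ ^ t * v t,
    if_neg (lt_irrefl n), sum_range_succ]
  ring

namespace FinMDP

variable {S A Rw : Type} (M : FinMDP S A Rw)

def stepKernel (μ : ℕ → S → A → ℝ) (t : ℕ) (s : S) (a : A) (r : Rw) (s' : S) : ℝ :=
  μ t s a * M.Rd s a r * M.P s a s'

noncomputable def importanceRatio (π π' : S → A → ℝ) (k : ℕ) (τ : M.Traj) : ℝ :=
  ∏ t ∈ range k, π' (M.st τ t) (M.ac τ t) / π (M.st τ t) (M.ac τ t)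

def tdError (b : S → ℝ) (t : ℕ) (τ : M.Traj) : ℝ :=
  M.rew τ t - b (M.st τ t) + M.γ * (if t < M.T then b (M.st τ (t + 1)) else 0)

theorem sum_discounted_tdError (b : S → ℝ) (τ : M.Traj) :
    ∑ t ∈ range (M.T + 1), M.γ ^ t * M.tdError b t τ = M.ret τ - b (M.st τ 0) :=
  sum_range_succ_discounted_telescope M.γ (M.rew τ) (fun t => b (M.st τ t)) M.T

theorem tdError_dependsOnPrefix (b : S → ℝ) (t : ℕ) :
    DependsOnPrefix (t + 1) fun σ α ρ => M.tdError b t (σ, α, ρ) := by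
  intro σ α ρ σ' α' ρ' hσ _ hρ
  simp only [tdError, rew, st]
  rw [hρ ⟨min t M.T, by omega⟩ (by simp), hσ ⟨min t (M.T + 1), by omega⟩ (by simp),
    hσ ⟨min (t + 1) (M.T + 1), by omega⟩ (by simp)]

section

variable [Fintype S] [Fintype A] [Fintype Rw]

theorem isStochastic_stepKernel (hM : M.Valid) {μ : ℕ → S → A → ℝ} (hμ : ∀ t, IsPolicy (μ t)) :
    IsStochastic (M.stepKernel μ) := by
  intro t s
  calc ∑ s', ∑ a, ∑ r, μ t s a * M.Rd s a r * M.P s a s'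
      = ∑ a, ∑ r, ∑ s', μ t s a * M.Rd s a r * M.P s a s' := by
        rw [sum_comm]; exact sum_congr rfl fun a _ => sum_comm
    _ = ∑ a, μ t s a := by simp only [← mul_sum, hM.2.1, hM.2.2.2, mul_one]
    _ = 1 := (hμ t).2 s

end

variable [DecidableEq S]

def probSeq (μ : ℕ → S → A → ℝ) (τ : M.Traj) : ℝ :=
  (if M.st τ 0 = M.s0 then (1 : ℝ) else 0) *
  ∏ t ∈ range (M.T + 1),
    M.stepKernel μ t (M.st τ t) (M.ac τ t) (τ.2.2 ⟨min t M.T, by omega⟩) (M.st τ (t + 1))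

theorem prob_eq_probSeq (π : S → A → ℝ) (τ : M.Traj) : M.prob π τ = M.probSeq (fun _ => π) τ :=
  rfl

theorem prob_mul_importanceRatio {π : S → A → ℝ} (hπ : ∀ s a, 0 < π s a) (π' : S → A → ℝ)
    {k : ℕ} (hk : k ≤ M.T + 1) (τ : M.Traj) :
    M.prob π τ * M.importanceRatio π π' k τ =
      M.probSeq (fun t => if t < k then π' else π) τ := by
  rw [prob, probSeq, importanceRatio, mul_assoc]
  congr 1
  refine prod_range_mul_prod_range_of_le hk (fun t ht => ?_) (fun t ht => ?_)
  · simp only [stepKernel, if_pos ht]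
    field_simp [(hπ _ _).ne']
  · simp only [stepKernel, if_neg (not_lt.mpr ht)]

variable [Fintype S] [Fintype A] [Fintype Rw]

theorem sum_probSeq_mul (μ : ℕ → S → A → ℝ) (f : M.Traj → ℝ) :
    ∑ τ, M.probSeq μ τ * f τ =
      pathSum (M.stepKernel μ) (M.T + 1) M.s0 fun σ α ρ => f (σ, α, ρ) := by
  -- the clamps `min t _` in `st`, `ac` and `probSeq` are inactive for `t ≤ T`
  have hprob (τ : M.Traj) : M.probSeq μ τ = (if τ.1 0 = M.s0 then (1 : ℝ) else 0) *
      ∏ t : Fin (M.T + 1), M.stepKernel μ t (τ.1 t.castSucc) (τ.2.1 t) (τ.2.2 t) (τ.1 t.succ) := by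
    rw [probSeq, ← Fin.prod_univ_eq_prod_range]
    congr 1
    refine prod_congr rfl fun t _ => ?_
    have ht := t.isLt
    congr 1
    all_goals
      try simp only [st, ac]
      refine congrArg _ (Fin.ext ?_)
      simp only [Fin.val_castSucc, Fin.val_succ]
      omega
  simp only [hprob]
  change ∑ τ : (Fin (M.T + 2) → S) × (Fin (M.T + 1) → A) × (Fin (M.T + 1) → Rw), _ = _
  simp only [Fintype.sum_prod_type, Fintype.sum_fun_fin_succ (n := M.T + 1), Fin.cons_zero,
    ite_mul, one_mul, zero_mul, sum_ite_irrel, sum_const_zero, sum_ite_eq', mem_univ, if_true]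
  rfl

theorem sum_prob_mul_initial (hM : M.Valid) {π : S → A → ℝ} (hπ : IsPolicy π) (g : S → ℝ) :
    ∑ τ, M.prob π τ * g (M.st τ 0) = g M.s0 := by
  simp only [prob_eq_probSeq, sum_probSeq_mul]
  exact pathSum_eq_of_forall_cons_eq (M.isStochastic_stepKernel hM fun _ => hπ) fun _ _ _ => rfl

theorem sum_prob_mul_importanceRatio_mul (hM : M.Valid) {π π' : S → A → ℝ} (hπ : IsPolicy π)
    (hπpos : ∀ s a, 0 < π s a) (hπ' : IsPolicy π') {k : ℕ} (hk : k ≤ M.T + 1) {f : M.Traj → ℝ}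
    (hf : DependsOnPrefix k fun σ α ρ => f (σ, α, ρ)) :
    ∑ τ, M.prob π τ * (M.importanceRatio π π' k τ * f τ) = ∑ τ, M.prob π' τ * f τ := by
  have hmix : ∀ t, IsPolicy (if t < k then π' else π) := fun t => by split_ifs <;> assumption
  simp only [← mul_assoc, M.prob_mul_importanceRatio hπpos π' hk, sum_probSeq_mul]
  simp only [prob_eq_probSeq, sum_probSeq_mul]
  exact pathSum_congr_of_dependsOnPrefix (M.isStochastic_stepKernel hM hmix)
    (M.isStochastic_stepKernel hM fun _ => hπ') (fun t ht => by
      funext s a r s'; simp only [stepKernel, if_pos ht]) hf _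

end FinMDP

theorem baseline_OPE_unbiased_general (M : FinMDP S A Rw) (hM : M.Valid)
    (π π' : S → A → ℝ) (hπ : IsPolicy π) (hπpos : ∀ s a, 0 < π s a) (hπ' : IsPolicy π')
    (b : S → ℝ) :
    ∑ τ : M.Traj, M.prob π τ *
      (b M.s0 + ∑ t ∈ range (M.T + 1), M.γ ^ t *
        (∏ t' ∈ range (t + 1), π' (M.st τ t') (M.ac τ t') / π (M.st τ t') (M.ac τ t')) *
        (M.rew τ t - b (M.st τ t) + M.γ * (if t < M.T then b (M.st τ (t + 1)) else 0)))
      = M.J π' := by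
  change ∑ τ, M.prob π τ * (b M.s0 + ∑ t ∈ range (M.T + 1),
    M.γ ^ t * M.importanceRatio π π' (t + 1) τ * M.tdError b t τ) = M.J π'
  have hunbiased : ∀ t ∈ range (M.T + 1),
      ∑ τ, M.prob π τ * (M.importanceRatio π π' (t + 1) τ * M.tdError b t τ) =
        ∑ τ, M.prob π' τ * M.tdError b t τ := fun t ht =>
    M.sum_prob_mul_importanceRatio_mul hM hπ hπpos hπ' (mem_range.mp ht)
      (M.tdError_dependsOnPrefix b t)
  calc _ = ∑ τ, M.prob π τ * b M.s0 + ∑ t ∈ range (M.T + 1), M.γ ^ t *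
        ∑ τ, M.prob π τ * (M.importanceRatio π π' (t + 1) τ * M.tdError b t τ) := by
        simp only [mul_add, sum_add_distrib, mul_sum]
        rw [sum_comm (s := univ)]
        congr 1
        exact sum_congr rfl fun t _ => sum_congr rfl fun τ _ => by ring
    _ = b M.s0 + ∑ τ, M.prob π' τ * ∑ t ∈ range (M.T + 1), M.γ ^ t * M.tdError b t τ := by
        rw [M.sum_prob_mul_initial hM hπ fun _ => b M.s0, sum_congr rfl fun t ht => by
          rw [hunbiased t ht]]
        simp only [mul_sum]
        rw [sum_comm]
        exact congrArg _ (sum_congr rfl fun τ _ => sum_congr rfl fun t _ => by ring)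
    _ = M.J π' := by
        simp only [M.sum_discounted_tdError b, mul_sub, sum_sub_distrib,
          M.sum_prob_mul_initial hM hπ' b, FinMDP.J]
        ring

/-- the baseline-corrected IS estimator
`Ĵ(π') = b(s₀) + Σ_{t=0}^T γ^t ρ_{[0:t]} (r_t − b(s_t) + γ b(s_{t+1}))`
(with the convention `b(s_{T+1}) = 0`) is unbiased for `J(π')` under
trajectories generated by `π`. -/
theorem baseline_OPE_unbiased (M : FinMDP S A Rw) (hM : M.Valid)
    (hγ0 : 0 ≤ M.γ) (hγ1 : M.γ < 1)
    (π π' : S → A → ℝ) (hπ : IsPolicy π) (hπpos : ∀ s a, 0 < π s a) (hπ' : IsPolicy π')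
    (b : S → ℝ) :
    ∑ τ : M.Traj, M.prob π τ *
      (b M.s0 + ∑ t ∈ range (M.T + 1), M.γ ^ t *
        (∏ t' ∈ range (t + 1), π' (M.st τ t') (M.ac τ t') / π (M.st τ t') (M.ac τ t')) *
        (M.rew τ t - b (M.st τ t) + M.γ * (if t < M.T then b (M.st τ (t + 1)) else 0)))
      = M.J π' :=
  baseline_OPE_unbiased_general M hM π π' hπ hπpos hπ' b
end

section
/- For a finite-horizon MDP, behavior policy π with full support, target policy π', and any bounded functions Q̃^{π'}: S×A → ℝ with Ṽ^{π'}(s) := E_{a~π'(s)}[Q̃^{π'}(s,a)] and Ṽ^{π'}(s_{T+1}) = 0, the doubly robust estimator Ĵ(π') = Ṽ^{π'}(s_0) + Σ_{t=0}^T γ^t ρ_{[0:t]} (r_t + γ Ṽ^{π'}(s_{t+1}) - Q̃^{π'}(s_t, a_t)) is an unbiased estimator of J(π') when trajectories are generated by π, regardless of the choice of Q̃^{π'}. -/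
open Finset

variable {S A Rw : Type} [Fintype S] [Fintype A] [Fintype Rw] [DecidableEq S] [DecidableEq A]

/-!
Let `E_t` be the expectation over trajectories of the policy that follows `π'` up to time `t`
and `π` afterwards; the importance weight `ρ_{[0:t]}` turns the law of `π` into this law, so the
estimator has mean `Ṽ(s₀) + Σ_t γ^t E_t[r_t + γ Ṽ(s_{t+1}) - Q̃(s_t, a_t)]`. A quantity of the
history up to `s_n` has the same mean under two policies that agree before time `n`, because the
later steps integrate to one. Hence `E_t[r_t]` is the mean reward of `π'` at time `t`, and, since
`a_{t+1} ~ π'(s_{t+1})` under `E_{t+1}`, `E_t[Ṽ(s_{t+1})] = E_{t+1}[Q̃(s_{t+1}, a_{t+1})]`. The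
`Q̃`-terms telescope to `-E_0[Q̃(s_0, a_0)] = -Ṽ(s₀)`, which cancels the baseline.
-/

theorem Fintype.sum_sum_eq_card_nsmul_sum_get {X Y β : Type*} [Fintype X] [Fintype Y]
    [AddCommMonoid β] (get : X → Y) (set : X → Y → X) (get_set : ∀ x y, get (set x y) = y)
    (set_set : ∀ x y y', set (set x y) y' = set x y') (set_get : ∀ x, set x (get x) = x)
    (F : X → Y → β) (hF : ∀ x y, F (set x y) = F x) :
    ∑ x, ∑ y, F x y = Fintype.card Y • ∑ x, F x (get x) := by
  let swap : X × Y → X × Y := fun p => (set p.1 p.2, get p.1)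
  have swap_involutive : Function.Involutive swap := fun p => by
    simp only [swap, get_set, set_set, set_get]
  calc ∑ x, ∑ y, F x y = ∑ p : X × Y, F (swap p).1 (get (swap p).1) := by
        rw [Fintype.sum_prod_type]
        simp only [swap, hF, get_set]
    _ = ∑ p : X × Y, F p.1 (get p.1) :=
        Fintype.sum_equiv swap_involutive.toPerm _ _ (fun _ => rfl)
    _ = Fintype.card Y • ∑ x, F x (get x) := by
        rw [Fintype.sum_prod_type, Finset.smul_sum]
        simp

theorem sum_range_discount_telescope (γ : ℝ) (R q : ℕ → ℝ) (N : ℕ) :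
    ∑ t ∈ range (N + 1), γ ^ t * (R t + γ * (if t < N then q (t + 1) else 0) - q t) =
      ∑ t ∈ range (N + 1), γ ^ t * R t - q 0 := by
  have hsub := sum_range_sub (fun t => if t ≤ N then γ ^ t * q t else 0) (N + 1)
  simp only [Nat.add_one_le_iff, lt_irrefl, if_false, Nat.zero_le, if_true, pow_zero,
    one_mul] at hsub
  rw [sub_eq_add_neg _ (q 0), ← zero_sub, ← hsub, ← sum_add_distrib]
  refine sum_congr rfl fun t ht => ?_
  rw [if_pos (Nat.lt_succ_iff.mp (mem_range.mp ht))]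
  split_ifs <;> ring

namespace FinMDP

omit [DecidableEq A]

variable (M : FinMDP S A Rw)

def outcome (τ : M.Traj) (t : ℕ) : Rw := τ.2.2 ⟨min t M.T, by omega⟩

def stepProb (w : ℕ → S → A → ℝ) (τ : M.Traj) (t : ℕ) : ℝ :=
  w t (M.st τ t) (M.ac τ t) * M.Rd (M.st τ t) (M.ac τ t) (M.outcome τ t) *
    M.P (M.st τ t) (M.ac τ t) (M.st τ (t + 1))

/-- Summed over all trajectories, `prefixProb w n` counts every value of the coordinates of the
steps `≥ n`, which it does not constrain. -/
def prefixProb (w : ℕ → S → A → ℝ) (n : ℕ) (τ : M.Traj) : ℝ :=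
  (if M.st τ 0 = M.s0 then (1 : ℝ) else 0) * ∏ t ∈ range n, M.stepProb w τ t

/-- Step `n` of a trajectory consists of `(a_n, r_n, s_{n+1})`. -/
def getStep (τ : M.Traj) (n : Fin (M.T + 1)) : A × Rw × S :=
  (τ.2.1 n, τ.2.2 n, τ.1 n.succ)

def setStep (τ : M.Traj) (n : Fin (M.T + 1)) (x : A × Rw × S) : M.Traj :=
  (Function.update τ.1 n.succ x.2.2, Function.update τ.2.1 n x.1, Function.update τ.2.2 n x.2.1)

/-- `f` is a function of the history `s_0, a_0, r_0, …, s_n` (which excludes `a_n`). -/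
def Adapted (n : ℕ) (f : M.Traj → ℝ) : Prop :=
  ∀ τ τ', (∀ k ≤ n, M.st τ k = M.st τ' k) → (∀ k < n, M.ac τ k = M.ac τ' k) →
    (∀ k < n, M.outcome τ k = M.outcome τ' k) → f τ = f τ'

def expect (w : ℕ → S → A → ℝ) (f : M.Traj → ℝ) : ℝ :=
  ∑ τ, M.prefixProb w (M.T + 1) τ * f τ

def hybridPolicy (t : ℕ) (π' π : S → A → ℝ) : ℕ → S → A → ℝ :=
  fun u => if u ≤ t then π' else π

section

omit [Fintype S] [Fintype A] [Fintype Rw] [DecidableEq S]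

variable {M} (τ : M.Traj) (n : Fin (M.T + 1)) (x y : A × Rw × S)

theorem getStep_setStep : M.getStep (M.setStep τ n x) n = x := by
  simp [getStep, setStep]

theorem setStep_setStep : M.setStep (M.setStep τ n x) n y = M.setStep τ n y := by
  simp only [setStep, Function.update_idem]
  rfl

theorem setStep_getStep : M.setStep τ n (M.getStep τ n) = τ := by
  simp only [setStep, getStep, Function.update_eq_self]
  rfl

theorem st_setStep {k : ℕ} (hk : k ≤ n) : M.st (M.setStep τ n x) k = M.st τ k := by
  simp only [st, setStep]
  rw [Function.update_of_ne]
  simp [Fin.ext_iff]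
  omega

theorem ac_setStep {k : ℕ} (hk : k < n) : M.ac (M.setStep τ n x) k = M.ac τ k := by
  simp only [ac, setStep]
  rw [Function.update_of_ne]
  simp [Fin.ext_iff]
  omega

theorem outcome_setStep {k : ℕ} (hk : k < n) :
    M.outcome (M.setStep τ n x) k = M.outcome τ k := by
  simp only [outcome, setStep]
  rw [Function.update_of_ne]
  simp [Fin.ext_iff]
  omega

theorem ac_eq_getStep : M.ac τ n = (M.getStep τ n).1 := by
  simp [ac, getStep, n.is_le]

theorem outcome_eq_getStep : M.outcome τ n = (M.getStep τ n).2.1 := by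
  simp [outcome, getStep, n.is_le]

theorem st_succ_eq_getStep : M.st τ (n + 1) = (M.getStep τ n).2.2 := by
  simp [st, getStep, Fin.succ, n.is_le]

theorem Adapted.mono {n m : ℕ} {f : M.Traj → ℝ} (hf : M.Adapted n f) (hnm : n ≤ m) :
    M.Adapted m f :=
  fun τ τ' hs ha ho => hf τ τ' (fun k hk => hs k (hk.trans hnm))
    (fun k hk => ha k (hk.trans_le hnm)) (fun k hk => ho k (hk.trans_le hnm))

theorem Adapted.setStep_eq {n : ℕ} {f : M.Traj → ℝ} (hf : M.Adapted n f) {m : Fin (M.T + 1)}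
    (hnm : n ≤ m) : f (M.setStep τ m x) = f τ :=
  hf _ _ (fun _ hk => st_setStep τ m x (hk.trans hnm))
    (fun _ hk => ac_setStep τ m x (hk.trans_le hnm))
    (fun _ hk => outcome_setStep τ m x (hk.trans_le hnm))

theorem adapted_const (n : ℕ) (c : ℝ) : M.Adapted n (fun _ => c) :=
  fun _ _ _ _ _ => rfl

theorem adapted_st {n k : ℕ} (hk : k ≤ n) (g : S → ℝ) : M.Adapted n (fun τ => g (M.st τ k)) :=
  fun _ _ hs _ _ => congrArg g (hs k hk)

theorem adapted_st_ac {n k : ℕ} (hk : k < n) (h : S → A → ℝ) :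
    M.Adapted n (fun τ => h (M.st τ k) (M.ac τ k)) :=
  fun _ _ hs ha _ => congrArg₂ h (hs k hk.le) (ha k hk)

theorem adapted_rew {n k : ℕ} (hk : k < n) : M.Adapted n (fun τ => M.rew τ k) :=
  fun _ _ _ _ ho => congrArg M.rval (ho k hk)

theorem hybridPolicy_of_le {π' π : S → A → ℝ} {t u : ℕ} (h : u ≤ t) :
    hybridPolicy t π' π u = π' :=
  if_pos h

end

section

omit [Fintype S] [Fintype A] [Fintype Rw]

variable {M}

theorem prob_eq_prefixProb (π : S → A → ℝ) : M.prob π = M.prefixProb (fun _ => π) (M.T + 1) :=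
  rfl

theorem prefixProb_adapted (w : ℕ → S → A → ℝ) (n : ℕ) : M.Adapted n (M.prefixProb w n) := by
  intro τ τ' hs ha ho
  unfold prefixProb stepProb
  rw [hs 0 (Nat.zero_le n)]
  refine congrArg _ (prod_congr rfl fun t ht => ?_)
  have ht : t < n := mem_range.mp ht
  rw [hs t ht.le, hs (t + 1) ht, ha t ht, ho t ht]

theorem prob_mul_prod_div {π : S → A → ℝ} (hπ : ∀ s a, 0 < π s a) (π' : S → A → ℝ) {t : ℕ}
    (ht : t ≤ M.T) (τ : M.Traj) :
    M.prob π τ * ∏ t' ∈ range (t + 1), π' (M.st τ t') (M.ac τ t') / π (M.st τ t') (M.ac τ t') =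
      M.prefixProb (hybridPolicy t π' π) (M.T + 1) τ := by
  have hrange : (range (M.T + 1)).filter (· ≤ t) = range (t + 1) := by
    ext u
    simp only [mem_filter, mem_range]
    omega
  rw [← hrange, prod_filter, prob_eq_prefixProb, prefixProb, prefixProb, mul_assoc,
    ← prod_mul_distrib]
  refine congrArg _ (prod_congr rfl fun u _ => ?_)
  have := (hπ (M.st τ u) (M.ac τ u)).ne'
  unfold stepProb hybridPolicy
  split_ifs
  · field_simp
  · rw [mul_one]

end

variable {M}

omit [Fintype S] [Fintype Rw] [DecidableEq S] in
theorem sum_hybridPolicy {π' π : S → A → ℝ} (hπ' : ∀ s, ∑ a, π' s a = 1)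
    (hπ : ∀ s, ∑ a, π s a = 1) (t u : ℕ) (s : S) : ∑ a, hybridPolicy t π' π u s a = 1 := by
  unfold hybridPolicy
  split_ifs
  exacts [hπ' s, hπ s]

theorem card_mul_sum_prefixProb_succ (hM : M.Valid) (w : ℕ → S → A → ℝ) (n : Fin (M.T + 1))
    {f : M.Traj → ℝ} (hf : M.Adapted n f) (h : S → A → ℝ) :
    Fintype.card (A × Rw × S) * ∑ τ, M.prefixProb w (n + 1) τ * f τ * h (M.st τ n) (M.ac τ n) =
      ∑ τ, M.prefixProb w n τ * f τ * ∑ a, w n (M.st τ n) a * h (M.st τ n) a := by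
  obtain ⟨-, hP, -, hRd⟩ := hM
  let F : M.Traj → A × Rw × S → ℝ := fun τ y => M.prefixProb w n τ * f τ *
    (M.P (M.st τ n) y.1 y.2.2 *
      (M.Rd (M.st τ n) y.1 y.2.1 * (w n (M.st τ n) y.1 * h (M.st τ n) y.1)))
  have hF : ∀ τ y, F (M.setStep τ n y) = F τ := fun τ y => by
    simp only [F, (prefixProb_adapted w n).setStep_eq _ _ le_rfl, hf.setStep_eq _ _ le_rfl,
      st_setStep τ n y le_rfl]
  calc _ = Fintype.card (A × Rw × S) • ∑ τ, F τ (M.getStep τ n) := by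
        rw [nsmul_eq_mul]
        refine congrArg _ (sum_congr rfl fun τ _ => ?_)
        simp only [F, prefixProb, stepProb, prod_range_succ, ← ac_eq_getStep,
          ← outcome_eq_getStep, ← st_succ_eq_getStep]
        ring
    _ = ∑ τ, ∑ y, F τ y :=
        (Fintype.sum_sum_eq_card_nsmul_sum_get _ _ (getStep_setStep · n) (setStep_setStep · n)
          (setStep_getStep · n) F hF).symm
    _ = _ := sum_congr rfl fun τ _ => by
        simp only [F, Fintype.sum_prod_type, ← mul_sum, ← sum_mul, hP, hRd, one_mul]

theorem card_pow_mul_expect (hM : M.Valid) {w : ℕ → S → A → ℝ} (hw : ∀ u s, ∑ a, w u s a = 1)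
    {n k : ℕ} (hnk : n + k = M.T + 1) {f : M.Traj → ℝ} (hf : M.Adapted n f) :
    (Fintype.card (A × Rw × S) : ℝ) ^ k * M.expect w f = ∑ τ, M.prefixProb w n τ * f τ := by
  induction k generalizing n with
  | zero => simp [expect, ← hnk]
  | succ k ih =>
    have hn : n < M.T + 1 := by omega
    rw [pow_succ', mul_assoc, ih (n := n + 1) (by omega) (hf.mono n.le_succ)]
    simpa [hw] using card_mul_sum_prefixProb_succ hM w ⟨n, hn⟩ hf (fun _ _ => 1)

theorem expect_eq_of_card_pow_mul_eq {w w' : ℕ → S → A → ℝ} {f f' : M.Traj → ℝ} {k : ℕ}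
    (h : (Fintype.card (A × Rw × S) : ℝ) ^ k * M.expect w f =
      (Fintype.card (A × Rw × S) : ℝ) ^ k * M.expect w' f') :
    M.expect w f = M.expect w' f' := by
  rcases isEmpty_or_nonempty M.Traj with hτ | ⟨⟨τ⟩⟩
  · simp [expect]
  · have : Nonempty (A × Rw × S) := ⟨M.getStep τ 0⟩
    exact mul_left_cancel₀ (pow_ne_zero k (Nat.cast_ne_zero.2 Fintype.card_ne_zero)) h

theorem expect_congr_policy (hM : M.Valid) {w w' : ℕ → S → A → ℝ}
    (hw : ∀ u s, ∑ a, w u s a = 1) (hw' : ∀ u s, ∑ a, w' u s a = 1) {n : ℕ} (hn : n ≤ M.T + 1)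
    (hww' : ∀ u < n, w u = w' u) {f : M.Traj → ℝ} (hf : M.Adapted n f) :
    M.expect w f = M.expect w' f := by
  apply expect_eq_of_card_pow_mul_eq (k := M.T + 1 - n)
  rw [card_pow_mul_expect hM hw (by omega) hf, card_pow_mul_expect hM hw' (by omega) hf]
  refine sum_congr rfl fun τ _ => congrArg (· * f τ) (congrArg _ (prod_congr rfl fun t ht => ?_))
  rw [stepProb, stepProb, hww' t (mem_range.mp ht)]

theorem expect_apply_st_ac (hM : M.Valid) {w : ℕ → S → A → ℝ} (hw : ∀ u s, ∑ a, w u s a = 1)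
    {n : ℕ} (hn : n ≤ M.T) (h : S → A → ℝ) :
    M.expect w (fun τ => h (M.st τ n) (M.ac τ n)) =
      M.expect w (fun τ => ∑ a, w n (M.st τ n) a * h (M.st τ n) a) := by
  apply expect_eq_of_card_pow_mul_eq (k := M.T - n + 1)
  rw [card_pow_mul_expect hM hw (by omega) (adapted_st le_rfl fun s => ∑ a, w n s a * h s a),
    pow_succ, mul_comm _ (Fintype.card _ : ℝ), mul_assoc,
    card_pow_mul_expect hM hw (by omega) (adapted_st_ac n.lt_succ_self h)]
  simpa using card_mul_sum_prefixProb_succ hM w ⟨n, by omega⟩ (adapted_const n 1) h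

theorem expect_st_zero (w : ℕ → S → A → ℝ) (g : S → ℝ) :
    M.expect w (fun τ => g (M.st τ 0)) = g M.s0 * M.expect w (fun _ => 1) := by
  rw [expect, expect, mul_sum]
  refine sum_congr rfl fun τ _ => ?_
  by_cases h0 : M.st τ 0 = M.s0 <;> simp [prefixProb, h0, mul_comm]

theorem expect_add (w : ℕ → S → A → ℝ) (f g : M.Traj → ℝ) :
    M.expect w (fun τ => f τ + g τ) = M.expect w f + M.expect w g := by
  simp only [expect, mul_add, sum_add_distrib]

theorem expect_sub (w : ℕ → S → A → ℝ) (f g : M.Traj → ℝ) :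
    M.expect w (fun τ => f τ - g τ) = M.expect w f - M.expect w g := by
  simp only [expect, mul_sub, sum_sub_distrib]

theorem expect_const_mul (w : ℕ → S → A → ℝ) (c : ℝ) (f : M.Traj → ℝ) :
    M.expect w (fun τ => c * f τ) = c * M.expect w f := by
  simp only [expect, mul_sum, mul_left_comm]

theorem sum_prob_mul_sum_importance {π : S → A → ℝ} (hπ : ∀ s a, 0 < π s a)
    (π' : S → A → ℝ) (c : ℕ → ℝ) (g : ℕ → M.Traj → ℝ) :
    ∑ τ, M.prob π τ * ∑ t ∈ range (M.T + 1), c t *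
        (∏ t' ∈ range (t + 1), π' (M.st τ t') (M.ac τ t') / π (M.st τ t') (M.ac τ t')) * g t τ =
      ∑ t ∈ range (M.T + 1), c t * M.expect (hybridPolicy t π' π) (g t) := by
  simp only [mul_sum, expect]
  rw [sum_comm]
  refine sum_congr rfl fun t ht => sum_congr rfl fun τ _ => ?_
  rw [← prob_mul_prod_div hπ π' (Nat.lt_succ_iff.mp (mem_range.mp ht)) τ]
  ring

theorem J_eq_sum_expect_rew (π : S → A → ℝ) :
    M.J π = ∑ t ∈ range (M.T + 1), M.γ ^ t * M.expect (fun _ => π) (fun τ => M.rew τ t) := by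
  simp only [J, ret, expect, mul_sum]
  rw [sum_comm]
  refine sum_congr rfl fun t _ => sum_congr rfl fun τ _ => ?_
  rw [prob_eq_prefixProb]
  ring

end FinMDP

open FinMDP

theorem doubly_robust_unbiased_general (M : FinMDP S A Rw) (hM : M.Valid)
    (π π' : S → A → ℝ) (hπ : IsPolicy π) (hπpos : ∀ s a, 0 < π s a) (hπ' : IsPolicy π')
    (Qt : S → A → ℝ) :
    ∑ τ : M.Traj, M.prob π τ *
      ((∑ a, π' M.s0 a * Qt M.s0 a) + ∑ t ∈ range (M.T + 1), M.γ ^ t *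
        (∏ t' ∈ range (t + 1), π' (M.st τ t') (M.ac τ t') / π (M.st τ t') (M.ac τ t')) *
        (M.rew τ t
          + M.γ * (if t < M.T then ∑ a, π' (M.st τ (t + 1)) a * Qt (M.st τ (t + 1)) a else 0)
          - Qt (M.st τ t) (M.ac τ t)))
      = M.J π' := by
  set V : S → ℝ := fun s => ∑ a, π' s a * Qt s a
  have hw := sum_hybridPolicy hπ'.2 hπ.2
  let q t := M.expect (hybridPolicy t π' π) (fun τ => Qt (M.st τ t) (M.ac τ t))
  have hq (t : ℕ) (ht : t ≤ M.T) :
      q t = M.expect (hybridPolicy t π' π) (fun τ => V (M.st τ t)) := by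
    simp only [q]
    rw [expect_apply_st_ac hM (hw t) ht Qt, hybridPolicy_of_le le_rfl]
  have hnext :
      ∀ t < M.T, M.expect (hybridPolicy t π' π) (fun τ => V (M.st τ (t + 1))) = q (t + 1) :=
    fun t ht => (hq (t + 1) ht).symm ▸ expect_congr_policy hM (hw t) (hw (t + 1)) (by omega)
      (fun u hu => by rw [hybridPolicy_of_le (by omega), hybridPolicy_of_le (by omega)])
      (adapted_st le_rfl V)
  have hq0 : q 0 = ∑ τ, M.prob π τ * V M.s0 := by
    rw [hq 0 (Nat.zero_le _), expect_st_zero, expect_congr_policy hM (hw 0) (fun _ => hπ.2)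
      (Nat.zero_le _) (by simp) (adapted_const 0 1), FinMDP.expect, mul_sum]
    simp_rw [mul_one, mul_comm (V M.s0), prob_eq_prefixProb]
  have hterm (t : ℕ) (ht : t ∈ range (M.T + 1)) :
      M.expect (hybridPolicy t π' π) (fun τ => M.rew τ t
        + M.γ * (if t < M.T then V (M.st τ (t + 1)) else 0) - Qt (M.st τ t) (M.ac τ t)) =
      M.expect (fun _ => π') (fun τ => M.rew τ t) + M.γ * (if t < M.T then q (t + 1) else 0)
        - q t := by
    have hrew := expect_congr_policy hM (hw t) (fun _ => hπ'.2) (mem_range.mp ht)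
      (fun u hu => hybridPolicy_of_le (Nat.lt_succ_iff.mp hu)) (adapted_rew t.lt_succ_self)
    by_cases hT : t < M.T
    · simp only [hT, if_true, expect_sub, expect_add, expect_const_mul, hrew, hnext t hT, q]
    · simp only [hT, if_false, mul_zero, add_zero, expect_sub, hrew, q]
  rw [sum_congr rfl fun τ _ => mul_add _ _ _, sum_add_distrib, sum_prob_mul_sum_importance hπpos,
    sum_congr rfl fun t ht => congrArg (M.γ ^ t * ·) (hterm t ht), sum_range_discount_telescope,
    J_eq_sum_expect_rew, hq0]
  ring

/-- the doubly robust estimator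
`Ĵ(π') = Ṽ(s₀) + Σ_{t=0}^T γ^t ρ_{[0:t]} (r_t + γ Ṽ(s_{t+1}) − Q̃(s_t,a_t))`,
with `Ṽ(s) := E_{a~π'(s)}[Q̃(s,a)]` and `Ṽ(s_{T+1}) = 0`, is unbiased for
`J(π')` under trajectories generated by `π`, for any `Q̃`. -/
theorem doubly_robust_unbiased (M : FinMDP S A Rw) (hM : M.Valid)
    (hγ0 : 0 ≤ M.γ) (hγ1 : M.γ < 1)
    (π π' : S → A → ℝ) (hπ : IsPolicy π) (hπpos : ∀ s a, 0 < π s a) (hπ' : IsPolicy π')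
    (Qt : S → A → ℝ) :
    ∑ τ : M.Traj, M.prob π τ *
      ((∑ a, π' M.s0 a * Qt M.s0 a) + ∑ t ∈ range (M.T + 1), M.γ ^ t *
        (∏ t' ∈ range (t + 1), π' (M.st τ t') (M.ac τ t') / π (M.st τ t') (M.ac τ t')) *
        (M.rew τ t
          + M.γ * (if t < M.T then ∑ a, π' (M.st τ (t + 1)) a * Qt (M.st τ (t + 1)) a else 0)
          - Qt (M.st τ t) (M.ac τ t)))
      = M.J π' :=
  doubly_robust_unbiased_general M hM π π' hπ hπpos hπ' Qt
end

section
/- In a finite episodic MDP with differentiable parameterized policy π_θ, for any function Q̃^{π_θ}: S×A → ℝ (possibly depending on θ differentiably) with Ṽ^{π_θ}(s) = Σ_a π_θ(a|s) Q̃^{π_θ}(s,a), the DR-PG estimator Σ_{t=0}^T { ∇_θ log π_θ(a_t|s_t) [Σ_{t1=t}^T γ^{t1} r_{t1} + Σ_{t2=t+1}^T γ^{t2}(Ṽ^{π_θ}(s_{t2}) − Q̃^{π_θ}(s_{t2},a_{t2}))] + γ^t (∇_θ Ṽ^{π_θ}(s_t) − ∇_θ Q̃^{π_θ}(s_t,a_t)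 − Q̃^{π_θ}(s_t,a_t) ∇_θ log π_θ(a_t|s_t)) } is an unbiased estimator of ∇_θ J(π_θ) on on-policy trajectories, where ∇_θ Ṽ^{π_θ}(s) = ∇_θ Σ_a π_θ(a|s) Q̃^{π_θ}(s,a) differentiates both the policy and Q̃. -/
open Finset

variable {S A Rw : Type} [Fintype S] [Fintype A] [Fintype Rw] [DecidableEq S] [DecidableEq A]

/-!
Differentiating the trajectory probabilities gives the likelihood-ratio formula
`∇J = E[Σₜ R · ∇log π(aₜ|sₜ)]`. Splitting `R` at time `t`, every remaining difference from the
DR-PG estimator is an increment `Φ(history up to sₜ)(aₜ)` with `Σₐ π(a|sₜ) Φ(a) = 0`, hence of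
expectation zero: the rewards before `t` times the score at `t` (the score has mean zero), the
control variate `Ṽ(s_{t₂}) - Q̃(s_{t₂}, a_{t₂})` for `t₂ > t`, and `∇Ṽ - ∇Q̃ - Q̃ ∇log π`, whose
`π`-average vanishes by the product rule because `π ∇log π = ∇π`.
-/

lemma Fintype.sum_fin_succ_pi {X M : Type*} [Fintype X] [AddCommMonoid M] (n : ℕ)
    (h : (Fin (n + 1) → X) → M) :
    ∑ f, h f = ∑ x, ∑ g : Fin n → X, h (Fin.cons x g) := by
  rw [← (Fin.consEquiv fun _ => X).sum_comp, Fintype.sum_prod_type]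
  rfl

section MarkovPath

variable {α X : Type*} (κ : α → X → ℝ) (next : X → α)

/-- The state before step `t` of the path `f` started at `s`, where step `x` leads to `next x`;
junk value `s` for `t > n`. -/
def pathState {n : ℕ} (s : α) (f : Fin n → X) : ℕ → α
  | 0 => s
  | t + 1 => if h : t < n then next (f ⟨t, h⟩) else s

def pathWeight {n : ℕ} (s : α) (f : Fin n → X) : ℝ :=
  ∏ i : Fin n, κ (pathState next s f i) (f i)

lemma pathState_cons_succ {n : ℕ} (s : α) (x : X) (g : Fin n → X) {t : ℕ} (ht : t < n) :
    pathState next s (Fin.cons x g : Fin (n + 1) → X) (t + 1) = pathState next (next x) g t := by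
  cases t with
  | zero => rfl
  | succ u =>
    have hu : u < n := by omega
    simp only [pathState, dif_pos hu, dif_pos (by omega : u + 1 < n + 1)]
    exact congrArg next (Fin.cons_succ (α := fun _ => X) x g ⟨u, hu⟩)

lemma pathWeight_cons {n : ℕ} (s : α) (x : X) (g : Fin n → X) :
    pathWeight κ next s (Fin.cons x g : Fin (n + 1) → X) = κ s x * pathWeight κ next (next x) g := by
  rw [pathWeight, Fin.prod_univ_succ]
  congr 1
  refine Finset.prod_congr rfl fun i _ => ?_
  rw [Fin.cons_succ, Fin.val_succ, pathState_cons_succ _ _ _ _ i.isLt]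

lemma pathState_congr {n t : ℕ} (s : α) {f g : Fin n → X}
    (hfg : ∀ i : Fin n, (i : ℕ) < t → f i = g i) {i : ℕ} (hi : i ≤ t) :
    pathState next s f i = pathState next s g i := by
  cases i with
  | zero => rfl
  | succ i =>
    simp only [pathState]
    split_ifs with h
    · rw [hfg ⟨i, h⟩ hi]
    · rfl

variable [Fintype X]

lemma sum_pathWeight (hκ : ∀ s, ∑ x, κ s x = 1) (n : ℕ) (s : α) :
    ∑ f : Fin n → X, pathWeight κ next s f = 1 := by
  induction n generalizing s with
  | zero => simp [pathWeight]
  | succ n ih =>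
    simp only [Fintype.sum_fin_succ_pi, pathWeight_cons, ← Finset.mul_sum, ih, mul_one, hκ]

lemma sum_pathWeight_smul_eq_zero_of_mean_zero {E : Type*} [AddCommGroup E] [Module ℝ E]
    (hκ : ∀ s, ∑ x, κ s x = 1) {t n : ℕ} (ht : t < n) (s : α) (G : (Fin n → X) → X → E)
    (hG : ∀ f g, (∀ i : Fin n, (i : ℕ) < t → f i = g i) → G f = G g)
    (hmean : ∀ f, ∑ x, κ (pathState next s f t) x • G f x = 0) :
    ∑ f, pathWeight κ next s f • G f (f ⟨t, ht⟩) = 0 := by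
  induction t generalizing n s with
  | zero =>
    rcases n with _ | n
    · omega
    rcases isEmpty_or_nonempty X with hX | ⟨⟨x₀⟩⟩
    · simp
    set c : Fin (n + 1) → X := fun _ => x₀
    have hconst : ∀ f, G f = G c := fun f => hG f c fun i hi => absurd hi (by omega)
    calc ∑ f, pathWeight κ next s f • G f (f ⟨0, ht⟩)
        = ∑ x, ∑ g : Fin n → X, (κ s x * pathWeight κ next (next x) g) • G c x := by
          simp only [Fintype.sum_fin_succ_pi, pathWeight_cons, hconst]
          rfl
      _ = ∑ x, κ s x • G c x := by
          simp only [mul_comm (κ _ _), mul_smul, ← Finset.sum_smul, sum_pathWeight κ next hκ,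
            one_smul]
      _ = 0 := hmean c
  | succ t ih =>
    rcases n with _ | n
    · omega
    have htn : t < n := by omega
    have hpast : ∀ x, ∑ g : Fin n → X,
        pathWeight κ next (next x) g • G (Fin.cons x g) (g ⟨t, htn⟩) = 0 := by
      intro x
      refine ih htn (next x) (fun g => G (Fin.cons x g)) (fun g g' hgg' => hG _ _ ?_) ?_
      · refine Fin.cases (fun _ => rfl) fun i hi => ?_
        simpa using hgg' i (by simpa using hi)
      · intro g
        rw [← pathState_cons_succ next s x g htn]
        exact hmean _
    simp only [Fintype.sum_fin_succ_pi, pathWeight_cons, mul_smul, ← Finset.smul_sum]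
    exact Finset.sum_eq_zero fun x _ => (congrArg (κ s x • ·) (hpast x)).trans (smul_zero _)

end MarkovPath

section LogDeriv

variable {E : Type*} [NormedAddCommGroup E] [NormedSpace ℝ E] {x : E}

lemma smul_fderiv_log {f : E → ℝ} (hf : DifferentiableAt ℝ f x) (hx : f x ≠ 0) :
    f x • fderiv ℝ (fun y => Real.log (f y)) x = fderiv ℝ f x := by
  rw [fderiv.log hf hx, smul_inv_smul₀ hx]

lemma sum_smul_fderiv_log_eq_zero {ι : Type*} [Fintype ι] {p : ι → E → ℝ}
    (hsum : ∀ y, ∑ i, p i y = 1) (hp : ∀ i, DifferentiableAt ℝ (p i) x) (hx : ∀ i, p i x ≠ 0) :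
    ∑ i, p i x • fderiv ℝ (fun y => Real.log (p i y)) x = 0 := by
  simp only [smul_fderiv_log (hp _) (hx _)]
  rw [← fderiv_fun_sum fun i _ => hp i, funext hsum, fderiv_const_apply]

lemma hasFDerivAt_prod_mul_const {ι : Type*} (u : Finset ι) {f : ι → E → ℝ} (c : ι → ℝ)
    (hf : ∀ i ∈ u, DifferentiableAt ℝ (f i) x) (hx : ∀ i ∈ u, f i x ≠ 0) :
    HasFDerivAt (fun y => ∏ i ∈ u, f i y * c i)
      ((∏ i ∈ u, f i x * c i) • ∑ i ∈ u, fderiv ℝ (fun y => Real.log (f i y)) x) x := by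
  classical
  induction u using Finset.induction_on with
  | empty => simpa using hasFDerivAt_const (1 : ℝ) x
  | insert a u ha ih =>
    simp only [Finset.prod_insert ha, Finset.sum_insert ha]
    have ha' := Finset.mem_insert_self a u
    refine (((hf a ha').hasFDerivAt.mul_const (c a)).mul
      (ih (fun i hi => hf i (Finset.mem_insert_of_mem hi))
        (fun i hi => hx i (Finset.mem_insert_of_mem hi)))).congr_fderiv ?_
    rw [← smul_fderiv_log (hf a ha') (hx a ha')]
    module

end LogDeriv

namespace FinMDP

variable (M : FinMDP S A Rw)

def stepWeight (π : S → A → ℝ) (s : S) (x : A × Rw × S) : ℝ :=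
  π s x.1 * M.Rd s x.1 x.2.1 * M.P s x.1 x.2.2

omit [DecidableEq S] [DecidableEq A] in
lemma sum_stepWeight_smul {E : Type*} [AddCommGroup E] [Module ℝ E] (hM : M.Valid)
    (π : S → A → ℝ) (s : S) (g : A → E) :
    ∑ x, M.stepWeight π s x • g x.1 = ∑ a, π s a • g a := by
  simp only [Fintype.sum_prod_type, ← Finset.sum_smul, stepWeight, ← Finset.mul_sum, hM.2.1,
    mul_one, hM.2.2.2]

/-- A trajectory is its initial state followed by the steps `(aₜ, rₜ, sₜ₊₁)`. -/
def trajEquiv : S × (Fin (M.T + 1) → A × Rw × S) ≃ M.Traj where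
  toFun p := (Fin.cons p.1 fun i => (p.2 i).2.2, fun i => (p.2 i).1, fun i => (p.2 i).2.1)
  invFun τ := (τ.1 0, fun i => (τ.2.1 i, τ.2.2 i, τ.1 i.succ))
  left_inv p := by simp
  right_inv τ := Prod.ext (Fin.cons_self_tail τ.1) rfl

section Coordinates

omit [Fintype S] [Fintype A] [Fintype Rw] [DecidableEq S] [DecidableEq A]

lemma st_trajEquiv (s : S) (f : Fin (M.T + 1) → A × Rw × S) {t : ℕ} (ht : t ≤ M.T + 1) :
    M.st (M.trajEquiv (s, f)) t = pathState (·.2.2) s f t := by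
  cases t with
  | zero => rfl
  | succ t =>
    have ht' : t < M.T + 1 := by omega
    simp only [st, pathState, dif_pos ht', min_eq_left ht]
    exact Fin.cons_succ (α := fun _ => S) s (fun i => (f i).2.2) ⟨t, ht'⟩

lemma ac_trajEquiv (s : S) (f : Fin (M.T + 1) → A × Rw × S) {t : ℕ} (ht : t ≤ M.T) :
    M.ac (M.trajEquiv (s, f)) t = (f ⟨t, by omega⟩).1 := by
  simp only [ac, min_eq_left ht]
  rfl

lemma rew_trajEquiv (s : S) (f : Fin (M.T + 1) → A × Rw × S) {t : ℕ} (ht : t ≤ M.T) :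
    M.rew (M.trajEquiv (s, f)) t = M.rval (f ⟨t, by omega⟩).2.1 := by
  simp only [rew, min_eq_left ht]
  rfl

end Coordinates

omit [Fintype S] [Fintype A] [Fintype Rw] [DecidableEq A] in
lemma prob_trajEquiv (π : S → A → ℝ) (s : S) (f : Fin (M.T + 1) → A × Rw × S) :
    M.prob π (M.trajEquiv (s, f))
      = (if s = M.s0 then 1 else 0) * pathWeight (M.stepWeight π) (·.2.2) s f := by
  rw [prob, pathWeight, ← Fin.prod_univ_eq_prod_range]
  congr 1
  refine Finset.prod_congr rfl fun i _ => ?_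
  have hr : (M.trajEquiv (s, f)).2.2 ⟨min i M.T, by omega⟩ = (f i).2.1 := by
    simp only [min_eq_left (Nat.le_of_lt_succ i.isLt)]
    rfl
  rw [st_trajEquiv M s f i.isLt.le, st_trajEquiv M s f i.isLt, ac_trajEquiv M s f (by omega), hr]
  simp only [stepWeight, pathState, dif_pos i.isLt]

omit [DecidableEq A] in
lemma sum_prob_smul {E : Type*} [AddCommGroup E] [Module ℝ E] (π : S → A → ℝ) (Φ : M.Traj → E) :
    ∑ τ, M.prob π τ • Φ τ
      = ∑ f, pathWeight (M.stepWeight π) (·.2.2) M.s0 f • Φ (M.trajEquiv (M.s0, f)) := by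
  rw [← M.trajEquiv.sum_comp, Fintype.sum_prod_type]
  simp only [prob_trajEquiv, ite_mul, one_mul, zero_mul, ite_smul, zero_smul,
    Finset.sum_ite_irrel, Finset.sum_const_zero, Finset.sum_ite_eq', Finset.mem_univ, if_true]

def HistoryDetermined {β : Type*} (t : ℕ) (Φ : M.Traj → β) : Prop :=
  ∀ τ τ', (∀ i ≤ t, M.st τ i = M.st τ' i) → (∀ i < t, M.ac τ i = M.ac τ' i) →
    (∀ i < t, M.rew τ i = M.rew τ' i) → Φ τ = Φ τ'

omit [DecidableEq A] in
theorem sum_prob_smul_eq_zero_of_mean_zero {E : Type*} [AddCommGroup E] [Module ℝ E]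
    (hM : M.Valid) {π : S → A → ℝ} (hπ : ∀ s, ∑ a, π s a = 1) {t : ℕ} (ht : t ≤ M.T)
    (Φ : M.Traj → A → E) (hΦ : M.HistoryDetermined t Φ)
    (hmean : ∀ τ, ∑ a, π (M.st τ t) a • Φ τ a = 0) :
    ∑ τ, M.prob π τ • Φ τ (M.ac τ t) = 0 := by
  have hκ : ∀ s, ∑ x, M.stepWeight π s x = 1 := fun s => by
    simpa [hπ] using M.sum_stepWeight_smul hM π s fun _ => (1 : ℝ)
  rw [sum_prob_smul]
  convert sum_pathWeight_smul_eq_zero_of_mean_zero (M.stepWeight π) (·.2.2) hκ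
    (show t < M.T + 1 by omega) M.s0 (fun f x => Φ (M.trajEquiv (M.s0, f)) x.1) ?_ ?_ using 3 with f
  · rw [ac_trajEquiv M _ f ht]
  · intro f g hfg
    refine funext fun x => congrFun (hΦ _ _ (fun i hi => ?_) (fun i hi => ?_) (fun i hi => ?_)) x.1
    · rw [st_trajEquiv M _ f (by omega), st_trajEquiv M _ g (by omega)]
      exact pathState_congr _ _ hfg hi
    · rw [ac_trajEquiv M _ f (by omega), ac_trajEquiv M _ g (by omega), hfg ⟨i, by omega⟩ hi]
    · rw [rew_trajEquiv M _ f (by omega), rew_trajEquiv M _ g (by omega), hfg ⟨i, by omega⟩ hi]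
  · intro f
    rw [M.sum_stepWeight_smul hM, ← st_trajEquiv M _ f (by omega)]
    exact hmean _

omit [DecidableEq A] in
theorem sum_prob_smul_value_sub_smul_eq_zero {F : Type*} [AddCommGroup F] [Module ℝ F]
    (hM : M.Valid) {π : S → A → ℝ} (hπ : ∀ s, ∑ a, π s a = 1) (Q : S → A → ℝ) {t : ℕ}
    (ht : t ≤ M.T) (W : M.Traj → F) (hW : M.HistoryDetermined t W) :
    ∑ τ, M.prob π τ •
      (((∑ a, π (M.st τ t) a * Q (M.st τ t) a) - Q (M.st τ t) (M.ac τ t)) • W τ) = 0 :=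
  M.sum_prob_smul_eq_zero_of_mean_zero hM hπ ht
    (fun τ a => ((∑ a', π (M.st τ t) a' * Q (M.st τ t) a') - Q (M.st τ t) a) • W τ)
    (fun τ τ' hs ha hr => by simp only [hs t le_rfl, hW τ τ' hs ha hr])
    (fun τ => by
      simp only [smul_smul, ← Finset.sum_smul, mul_sub, Finset.sum_sub_distrib, ← Finset.sum_mul,
        hπ, one_mul, sub_self, zero_smul])

omit [Fintype S] [Fintype A] [Fintype Rw] [DecidableEq S] [DecidableEq A] in
lemma ret_eq_sum_range_add_sum_Icc (τ : M.Traj) {t : ℕ} (ht : t ≤ M.T + 1) :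
    M.ret τ = ∑ t1 ∈ range t, M.γ ^ t1 * M.rew τ t1 + ∑ t1 ∈ Icc t M.T, M.γ ^ t1 * M.rew τ t1 := by
  rw [ret, ← Finset.sum_range_add_sum_Ico _ ht, Finset.Ico_add_one_right_eq_Icc]

section PolicyGradient

variable {E : Type*} [NormedAddCommGroup E] [NormedSpace ℝ E] {πf : E → S → A → ℝ} {θ : E}

omit [Fintype S] [Fintype A] [Fintype Rw] [DecidableEq A] in
lemma hasFDerivAt_prob (hpos : ∀ s a, πf θ s a ≠ 0)
    (hdiff : ∀ s a, DifferentiableAt ℝ (fun θ' => πf θ' s a) θ) (τ : M.Traj) :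
    HasFDerivAt (fun θ' => M.prob (πf θ') τ)
      (M.prob (πf θ) τ • ∑ t ∈ range (M.T + 1),
        fderiv ℝ (fun θ' => Real.log (πf θ' (M.st τ t) (M.ac τ t))) θ) θ := by
  simp only [prob, mul_assoc]
  rw [mul_smul]
  exact (hasFDerivAt_prod_mul_const _ _ (fun _ _ => hdiff _ _) fun _ _ => hpos _ _).const_mul _

omit [DecidableEq A] in
lemma hasFDerivAt_J (hpos : ∀ s a, πf θ s a ≠ 0)
    (hdiff : ∀ s a, DifferentiableAt ℝ (fun θ' => πf θ' s a) θ) :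
    HasFDerivAt (fun θ' => M.J (πf θ'))
      (∑ τ, M.prob (πf θ) τ • ∑ t ∈ range (M.T + 1),
        M.ret τ • fderiv ℝ (fun θ' => Real.log (πf θ' (M.st τ t) (M.ac τ t))) θ) θ := by
  refine (HasFDerivAt.fun_sum fun τ _ =>
    (M.hasFDerivAt_prob hpos hdiff τ).mul_const (M.ret τ)).congr_fderiv ?_
  exact Finset.sum_congr rfl fun τ _ => by rw [← Finset.smul_sum, smul_comm]

variable (hsum : ∀ θ' s, ∑ a, πf θ' s a = 1) (hpos : ∀ s a, πf θ s a ≠ 0)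
  (hdiff : ∀ s a, DifferentiableAt ℝ (fun θ' => πf θ' s a) θ)
include hsum hpos hdiff

omit [DecidableEq A] in
theorem sum_prob_smul_smul_score_eq_zero (hM : M.Valid) {t : ℕ} (ht : t ≤ M.T) (W : M.Traj → ℝ)
    (hW : M.HistoryDetermined t W) :
    ∑ τ, M.prob (πf θ) τ •
      (W τ • fderiv ℝ (fun θ' => Real.log (πf θ' (M.st τ t) (M.ac τ t))) θ) = 0 :=
  M.sum_prob_smul_eq_zero_of_mean_zero hM (hsum θ) ht
    (fun τ a => W τ • fderiv ℝ (fun θ' => Real.log (πf θ' (M.st τ t) a)) θ)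
    (fun τ τ' hs ha hr => by simp only [hs t le_rfl, hW τ τ' hs ha hr])
    (fun τ => by
      simp only [smul_comm (πf θ _ _) (W τ), ← Finset.smul_sum,
        sum_smul_fderiv_log_eq_zero (fun θ' => hsum θ' _) (hdiff _) (hpos _), smul_zero])

omit [DecidableEq A] in
theorem sum_prob_smul_fderiv_value_sub_eq_zero (hM : M.Valid) {Qt : E → S → A → ℝ}
    (hQdiff : ∀ s a, DifferentiableAt ℝ (fun θ' => Qt θ' s a) θ) {t : ℕ} (ht : t ≤ M.T) :
    ∑ τ, M.prob (πf θ) τ •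
      (fderiv ℝ (fun θ' => ∑ a, πf θ' (M.st τ t) a * Qt θ' (M.st τ t) a) θ
        - fderiv ℝ (fun θ' => Qt θ' (M.st τ t) (M.ac τ t)) θ
        - Qt θ (M.st τ t) (M.ac τ t) •
            fderiv ℝ (fun θ' => Real.log (πf θ' (M.st τ t) (M.ac τ t))) θ) = 0 := by
  refine M.sum_prob_smul_eq_zero_of_mean_zero hM (hsum θ) ht
    (fun τ a => fderiv ℝ (fun θ' => ∑ a', πf θ' (M.st τ t) a' * Qt θ' (M.st τ t) a') θ
        - fderiv ℝ (fun θ' => Qt θ' (M.st τ t) a) θ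
        - Qt θ (M.st τ t) a • fderiv ℝ (fun θ' => Real.log (πf θ' (M.st τ t) a)) θ)
    (fun τ τ' hs _ _ => by simp only [hs t le_rfl]) fun τ => ?_
  set s := M.st τ t
  have hV : fderiv ℝ (fun θ' => ∑ a, πf θ' s a * Qt θ' s a) θ
      = ∑ a, (πf θ s a • fderiv ℝ (fun θ' => Qt θ' s a) θ
        + Qt θ s a • πf θ s a • fderiv ℝ (fun θ' => Real.log (πf θ' s a)) θ) := by
    rw [fderiv_fun_sum fun a _ => (hdiff s a).fun_mul (hQdiff s a)]
    refine Finset.sum_congr rfl fun a _ => ?_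
    rw [fderiv_fun_mul (hdiff s a) (hQdiff s a), smul_fderiv_log (hdiff s a) (hpos s a)]
  simp only [smul_sub, Finset.sum_sub_distrib, ← Finset.sum_smul, hsum, one_smul,
    smul_comm (πf θ s _) (Qt θ s _), hV, Finset.sum_add_distrib]
  abel

omit [DecidableEq A] in
theorem sum_prob_smul_drpg_term_eq (hM : M.Valid) {Qt : E → S → A → ℝ}
    (hQdiff : ∀ s a, DifferentiableAt ℝ (fun θ' => Qt θ' s a) θ) {t : ℕ} (ht : t ≤ M.T) :
    ∑ τ, M.prob (πf θ) τ •
      (((∑ t1 ∈ Icc t M.T, M.γ ^ t1 * M.rew τ t1)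
          + ∑ t2 ∈ Icc (t + 1) M.T, M.γ ^ t2 *
              ((∑ a, πf θ (M.st τ t2) a * Qt θ (M.st τ t2) a)
                - Qt θ (M.st τ t2) (M.ac τ t2))) •
          fderiv ℝ (fun θ' => Real.log (πf θ' (M.st τ t) (M.ac τ t))) θ
        + M.γ ^ t •
          (fderiv ℝ (fun θ' => ∑ a, πf θ' (M.st τ t) a * Qt θ' (M.st τ t) a) θ
            - fderiv ℝ (fun θ' => Qt θ' (M.st τ t) (M.ac τ t)) θ
            - Qt θ (M.st τ t) (M.ac τ t) •
                fderiv ℝ (fun θ' => Real.log (πf θ' (M.st τ t) (M.ac τ t))) θ))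
      = ∑ τ, M.prob (πf θ) τ •
          (M.ret τ • fderiv ℝ (fun θ' => Real.log (πf θ' (M.st τ t) (M.ac τ t))) θ) := by
  have hpast := M.sum_prob_smul_smul_score_eq_zero hsum hpos hdiff hM ht
    (fun τ => ∑ t1 ∈ range t, M.γ ^ t1 * M.rew τ t1)
    (fun τ τ' _ _ hr => Finset.sum_congr rfl fun i hi => by rw [hr i (mem_range.mp hi)])
  have hbaseline : ∑ τ, M.prob (πf θ) τ • ((∑ t2 ∈ Icc (t + 1) M.T, M.γ ^ t2 *
      ((∑ a, πf θ (M.st τ t2) a * Qt θ (M.st τ t2) a) - Qt θ (M.st τ t2) (M.ac τ t2))) •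
        fderiv ℝ (fun θ' => Real.log (πf θ' (M.st τ t) (M.ac τ t))) θ) = 0 := by
    simp only [Finset.sum_smul, Finset.smul_sum, mul_smul]
    rw [Finset.sum_comm]
    refine Finset.sum_eq_zero fun t2 ht2 => ?_
    obtain ⟨htt2, ht2T⟩ := Finset.mem_Icc.mp ht2
    simp only [smul_comm (M.γ ^ t2)]
    exact M.sum_prob_smul_value_sub_smul_eq_zero hM (hsum θ) (Qt θ) ht2T _
      fun τ τ' hs ha _ => by rw [hs t (by omega), ha t (by omega)]
  have hcorrection := M.sum_prob_smul_fderiv_value_sub_eq_zero hsum hpos hdiff hM hQdiff ht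
  simp only [M.ret_eq_sum_range_add_sum_Icc _ (Nat.le_succ_of_le ht), add_smul, smul_add,
    Finset.sum_add_distrib, hpast, hbaseline, smul_comm _ (M.γ ^ t), ← Finset.smul_sum,
    hcorrection, smul_zero, add_zero, zero_add]

end PolicyGradient

end FinMDP

/-- the general DR-PG estimator, with a θ-dependent approximate
Q-function `Q̃^{π_θ}` and `Ṽ^{π_θ}(s) = Σ_a π_θ(a|s) Q̃^{π_θ}(s,a)`, is unbiased
for `∇_θ J(π_θ)` on on-policy trajectories; `∇_θ Ṽ` differentiates both the
policy and `Q̃`. -/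
theorem drpg_unbiased (M : FinMDP S A Rw) (hM : M.Valid)
    {d : ℕ} (θ : Fin d → ℝ) (πf : (Fin d → ℝ) → S → A → ℝ)
    (hpol : ∀ θ', IsPolicy (πf θ'))
    (hpos : ∀ θ' s a, 0 < πf θ' s a)
    (hdiff : ∀ s a, Differentiable ℝ (fun θ' => πf θ' s a))
    (Qt : (Fin d → ℝ) → S → A → ℝ)
    (hQdiff : ∀ s a, Differentiable ℝ (fun θ' => Qt θ' s a)) :
    ∑ τ : M.Traj, M.prob (πf θ) τ •
      (∑ t ∈ range (M.T + 1),
        (((∑ t1 ∈ Finset.Icc t M.T, M.γ ^ t1 * M.rew τ t1)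
          + ∑ t2 ∈ Finset.Icc (t + 1) M.T, M.γ ^ t2 *
              ((∑ a, πf θ (M.st τ t2) a * Qt θ (M.st τ t2) a)
                - Qt θ (M.st τ t2) (M.ac τ t2))) •
          fderiv ℝ (fun θ' => Real.log (πf θ' (M.st τ t) (M.ac τ t))) θ
        + M.γ ^ t •
          (fderiv ℝ (fun θ' => ∑ a, πf θ' (M.st τ t) a * Qt θ' (M.st τ t) a) θ
            - fderiv ℝ (fun θ' => Qt θ' (M.st τ t) (M.ac τ t)) θ
            - Qt θ (M.st τ t) (M.ac τ t) •
                fderiv ℝ (fun θ' => Real.log (πf θ' (M.st τ t) (M.ac τ t))) θ)))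
      = fderiv ℝ (fun θ' => M.J (πf θ')) θ := by
  have hsum : ∀ θ' s, ∑ a, πf θ' s a = 1 := fun θ' => (hpol θ').2
  have hne : ∀ s a, πf θ s a ≠ 0 := fun s a => (hpos θ s a).ne'
  have hdiffθ : ∀ s a, DifferentiableAt ℝ (fun θ' => πf θ' s a) θ := fun s a => hdiff s a θ
  rw [(M.hasFDerivAt_J hne hdiffθ).fderiv]
  simp only [Finset.smul_sum]
  rw [Finset.sum_comm, Finset.sum_comm (s := Finset.univ)]
  exact Finset.sum_congr rfl fun t ht => M.sum_prob_smul_drpg_term_eq hsum hne hdiffθ hM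
    (fun s a => hQdiff s a θ) (Nat.lt_succ_iff.mp (mem_range.mp ht))
end
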